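/- Let β > 1 and let P, Q be probability measures with Q = π_ref, P = π_{β,r} the Gibbs tilt dP = e^{βr} dQ / Z_β. Then the centered log-MGF of r under P at β-1 satisfies (1/(β-1)) log E_P[e^{(β-1)(r - E_P r)}] ≤ (D_β(P||Q) - KL(P||Q))/β, where D_β is the Rényi divergence of order β. -/

import Mathlib

open MeasureTheory Real
open scoped NNReal ENNReal

/-- The KL divergence `∫ log (dP/dQ) dP`, as a real number. -/
noncomputable def klDivReal {α : Type*} [MeasurableSpace α] (P Q : Measure α) : ℝ :=
  ∫ x, Real.log ((P.rnDeriv Q x).toReal) ∂P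

/-- The Rényi divergence of order `a`, `(1/(a-1)) log ∫ (dP/dQ)^a dQ`, as a real number. -/
noncomputable def renyiDivReal {α : Type*} [MeasurableSpace α] (a : ℝ)
    (P Q : Measure α) : ℝ :=
  (1 / (a - 1)) * Real.log (∫ x, ((P.rnDeriv Q x).toReal) ^ a ∂Q)

private lemma exp_mul_integrable {Ω : Type*} [MeasurableSpace Ω] (Q : Measure Ω)
    [IsProbabilityMeasure Q] {r : Ω → ℝ} (hr : Measurable r) {C : ℝ}
    (hbdd : ∀ x, |r x| ≤ C) (s : ℝ) :
    Integrable (fun x => Real.exp (s * r x)) Q := by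
  refine (integrable_const (Real.exp (|s| * C))).mono'
    ((hr.const_mul s).exp).aestronglyMeasurable ?_
  filter_upwards with x
  rw [Real.norm_eq_abs, abs_of_pos (Real.exp_pos _)]
  refine Real.exp_le_exp.2 (le_trans (le_abs_self _) ?_)
  rw [abs_mul]
  exact mul_le_mul_of_nonneg_left (hbdd x) (abs_nonneg s)

private lemma exp_mul_memLp {Ω : Type*} [MeasurableSpace Ω] (Q : Measure Ω)
    [IsProbabilityMeasure Q] {r : Ω → ℝ} (hr : Measurable r) {C : ℝ}
    (hbdd : ∀ x, |r x| ≤ C) (s : ℝ) (p : ℝ≥0∞) :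
    MemLp (fun x => Real.exp (s * r x)) p Q := by
  refine MemLp.of_bound ((hr.const_mul s).exp).aestronglyMeasurable (Real.exp (|s| * C)) ?_
  filter_upwards with x
  rw [Real.norm_eq_abs, abs_of_pos (Real.exp_pos _)]
  refine Real.exp_le_exp.2 (le_trans (le_abs_self _) ?_)
  rw [abs_mul]
  exact mul_le_mul_of_nonneg_left (hbdd x) (abs_nonneg s)

/-- For the Gibbs tilted measure `dP = e^{βr} dQ / Z_β` with `β > 1`, the centered
log-MGF of `r` under `P` at `β - 1` is bounded by `(D_β(P‖Q) - KL(P‖Q))/β`. -/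
theorem gibbs_centered_logmgf_bound
    {Ω : Type*} [MeasurableSpace Ω] (Q : Measure Ω) [IsProbabilityMeasure Q]
    (r : Ω → ℝ) (hr : Measurable r) (C : ℝ) (hbdd : ∀ x, |r x| ≤ C)
    (β : ℝ) (hβ : 1 < β)
    (P : Measure Ω)
    (hP : P = Q.withDensity (fun x =>
      ENNReal.ofReal (Real.exp (β * r x) / ∫ y, Real.exp (β * r y) ∂Q))) :
    (1 / (β - 1)) *
        Real.log (∫ x, Real.exp ((β - 1) * (r x - ∫ y, r y ∂P)) ∂P)
      ≤ (renyiDivReal β P Q - klDivReal P Q) / β := by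
  have hβ0 : (0:ℝ) < β := lt_trans one_pos hβ
  have hβ1 : (0:ℝ) < β - 1 := sub_pos.2 hβ
  have hβ1' : β - 1 ≠ 0 := hβ1.ne'
  have hint : ∀ s : ℝ, Integrable (fun x => Real.exp (s * r x)) Q :=
    exp_mul_integrable Q hr hbdd
  set Z : ℝ := ∫ y, Real.exp (β * r y) ∂Q with hZdef
  set Z2 : ℝ := ∫ y, Real.exp ((β * β) * r y) ∂Q with hZ2def
  set Z3 : ℝ := ∫ y, Real.exp ((2 * β - 1) * r y) ∂Q with hZ3def
  have hZ : 0 < Z := integral_exp_pos (hint β)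
  have hZ2 : 0 < Z2 := integral_exp_pos (hint _)
  have hZ3 : 0 < Z3 := integral_exp_pos (hint _)
  have hd : ∀ x : Ω, 0 ≤ Real.exp (β * r x) / Z :=
    fun x => div_nonneg (Real.exp_pos _).le hZ.le
  have hdm : Measurable (fun x => Real.exp (β * r x) / Z) :=
    ((hr.const_mul β).exp).div_const Z
  -- integrals against P
  have hPint : ∀ g : Ω → ℝ,
      ∫ x, g x ∂P = ∫ x, (Real.exp (β * r x) / Z) * g x ∂Q := by
    intro g
    rw [hP]
    have hfm : Measurable (fun x => Real.toNNReal (Real.exp (β * r x) / Z)) :=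
      hdm.real_toNNReal
    have hcoe : (fun x => ENNReal.ofReal (Real.exp (β * r x) / Z))
        = fun x => ((Real.toNNReal (Real.exp (β * r x) / Z) : ℝ≥0) : ℝ≥0∞) := rfl
    rw [hcoe, integral_withDensity_eq_integral_smul hfm g]
    refine integral_congr_ae (Filter.Eventually.of_forall fun x => ?_)
    simp [NNReal.smul_def, Real.coe_toNNReal _ (hd x)]
  -- P is a probability measure
  have hPprob : IsProbabilityMeasure P := by
    constructor
    rw [hP, withDensity_apply _ MeasurableSet.univ, Measure.restrict_univ,
      ← ofReal_integral_eq_lintegral_ofReal ((hint β).div_const Z)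
        (Filter.Eventually.of_forall hd)]
    rw [integral_div, div_self hZ.ne', ENNReal.ofReal_one]
  set m : ℝ := ∫ y, r y ∂P with hmdef
  -- Radon-Nikodym derivative
  have hrn : (fun x => (P.rnDeriv Q x).toReal) =ᵐ[Q]
      fun x => Real.exp (β * r x) / Z := by
    rw [hP]
    filter_upwards [Q.rnDeriv_withDensity hdm.ennreal_ofReal] with x hx
    rw [hx, ENNReal.toReal_ofReal (hd x)]
  -- Rényi divergence value
  have hren : renyiDivReal β P Q
      = (1 / (β - 1)) * (Real.log Z2 - β * Real.log Z) := by
    unfold renyiDivReal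
    have h1 : ∫ x, ((P.rnDeriv Q x).toReal) ^ β ∂Q = Z2 / Z ^ β := by
      have h2 : ∫ x, ((P.rnDeriv Q x).toReal) ^ β ∂Q
          = ∫ x, Real.exp ((β * β) * r x) / Z ^ β ∂Q := by
        refine integral_congr_ae ?_
        filter_upwards [hrn] with x hx
        rw [hx, Real.div_rpow (Real.exp_pos _).le hZ.le, ← Real.exp_mul,
          show β * r x * β = (β * β) * r x from by ring]
      rw [h2, integral_div]
    rw [h1, Real.log_div hZ2.ne' (Real.rpow_pos_of_pos hZ β).ne', Real.log_rpow hZ]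
  -- KL divergence value
  have hkl : klDivReal P Q = β * m - Real.log Z := by
    unfold klDivReal
    have hPQ : P ≪ Q := hP ▸ withDensity_absolutelyContinuous Q _
    have hae : (fun x => Real.log ((P.rnDeriv Q x).toReal)) =ᵐ[P]
        fun x => β * r x - Real.log Z := by
      filter_upwards [hPQ.ae_eq hrn] with x hx
      rw [hx, Real.log_div (Real.exp_pos _).ne' hZ.ne', Real.log_exp]
    rw [integral_congr_ae hae]
    have hrint : Integrable r P := by
      refine (integrable_const C).mono' hr.aestronglyMeasurable ?_
      filter_upwards with x
      rw [Real.norm_eq_abs]; exact hbdd x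
    rw [integral_sub (hrint.const_mul β) (integrable_const _), integral_const_mul,
      integral_const, probReal_univ, one_smul, ← hmdef]
  -- value of the MGF integral
  have hlhs : ∫ x, Real.exp ((β - 1) * (r x - m)) ∂P
      = Real.exp (-(β - 1) * m) / Z * Z3 := by
    rw [hPint]
    have h1 : (fun x => (Real.exp (β * r x) / Z) * Real.exp ((β - 1) * (r x - m)))
        = fun x => (Real.exp (-(β - 1) * m) / Z) * Real.exp ((2 * β - 1) * r x) := by
      funext x
      rw [div_mul_eq_mul_div, div_mul_eq_mul_div, ← Real.exp_add, ← Real.exp_add]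
      congr 2
      ring
    rw [h1, integral_const_mul]
  have hlog : Real.log (∫ x, Real.exp ((β - 1) * (r x - m)) ∂P)
      = -(β - 1) * m - Real.log Z + Real.log Z3 := by
    rw [hlhs, Real.log_mul (by positivity) hZ3.ne',
      Real.log_div (Real.exp_pos _).ne' hZ.ne', Real.log_exp]
  -- Hölder's inequality
  have hhold : Real.log Z3 ≤ (1 / β) * Real.log Z2 + ((β - 1) / β) * Real.log Z := by
    have hpq : Real.HolderConjugate β (β / (β - 1)) :=
      Real.HolderConjugate.conjExponent hβ
    have h := integral_mul_le_Lp_mul_Lq_of_nonneg hpq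
      (f := fun x => Real.exp (β * r x)) (g := fun x => Real.exp ((β - 1) * r x))
      (Filter.Eventually.of_forall fun x => (Real.exp_pos _).le)
      (Filter.Eventually.of_forall fun x => (Real.exp_pos _).le)
      (exp_mul_memLp Q hr hbdd β _) (exp_mul_memLp Q hr hbdd (β - 1) _)
    have e1 : ∫ x, Real.exp (β * r x) * Real.exp ((β - 1) * r x) ∂Q = Z3 := by
      refine integral_congr_ae (Filter.Eventually.of_forall fun x => ?_)
      show Real.exp (β * r x) * Real.exp ((β - 1) * r x) = Real.exp ((2 * β - 1) * r x)
      rw [← Real.exp_add]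
      congr 1; ring
    have e2 : ∫ x, Real.exp (β * r x) ^ β ∂Q = Z2 := by
      refine integral_congr_ae (Filter.Eventually.of_forall fun x => ?_)
      show Real.exp (β * r x) ^ β = Real.exp ((β * β) * r x)
      rw [← Real.exp_mul]
      congr 1; ring
    have e3 : ∫ x, Real.exp ((β - 1) * r x) ^ (β / (β - 1)) ∂Q = Z := by
      refine integral_congr_ae (Filter.Eventually.of_forall fun x => ?_)
      show Real.exp ((β - 1) * r x) ^ (β / (β - 1)) = Real.exp (β * r x)
      rw [← Real.exp_mul]
      congr 1
      field_simp
    rw [e1, e2, e3] at h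
    have h4 : (1 : ℝ) / (β / (β - 1)) = (β - 1) / β := one_div_div _ _
    rw [h4] at h
    calc Real.log Z3 ≤ Real.log (Z2 ^ (1 / β) * Z ^ ((β - 1) / β)) :=
          Real.log_le_log hZ3 h
      _ = (1 / β) * Real.log Z2 + ((β - 1) / β) * Real.log Z := by
          rw [Real.log_mul (Real.rpow_pos_of_pos hZ2 _).ne'
            (Real.rpow_pos_of_pos hZ _).ne', Real.log_rpow hZ2, Real.log_rpow hZ]
  -- conclude
  rw [hren, hkl, hlog]
  have hfact : ((1 / (β - 1)) * (Real.log Z2 - β * Real.log Z)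
        - (β * m - Real.log Z)) / β
      - (1 / (β - 1)) * (-(β - 1) * m - Real.log Z + Real.log Z3)
      = ((1 / β) * Real.log Z2 + ((β - 1) / β) * Real.log Z - Real.log Z3) / (β - 1) := by
    field_simp
    ring
  have hnn : 0 ≤ ((1 / β) * Real.log Z2 + ((β - 1) / β) * Real.log Z - Real.log Z3)
      / (β - 1) := div_nonneg (sub_nonneg.2 hhold) hβ1.le
  linarith
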